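/- Let γ, v be a smooth Legendre curve in UTS² with frame η = γ×v and curvature functions m, n (γ' = mη, v' = nη), with m and n nowhere zero. Then the ruled surface Φ(s,u) = γ(s) + u·v(s) has its singular locus on the curve σ(s) = γ(s) - (m(s)/n(s))·v(s), and σ'(s) = -(m/n)'(s)·v(s). In particular, if m/n is constant, σ is a single point and Φ is a cone. -/

import Mathlib

open scoped RealInnerProductSpace

noncomputable def cross (a b : EuclideanSpace ℝ (Fin 3)) : EuclideanSpace ℝ (Fin 3) :=
  WithLp.toLp 2 ![a 1 * b 2 - a 2 * b 1, a 2 * b 0 - a 0 * b 2, a 0 * b 1 - a 1 * b 0]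

noncomputable def det3 (a b c : EuclideanSpace ℝ (Fin 3)) : ℝ := ⟪a, cross b c⟫

noncomputable def v3 (x y z : ℝ) : EuclideanSpace ℝ (Fin 3) := WithLp.toLp 2 ![x, y, z]

lemma inner3 (a b : EuclideanSpace ℝ (Fin 3)) :
    ⟪a, b⟫ = a 0 * b 0 + a 1 * b 1 + a 2 * b 2 := by
  simp [PiLp.inner_apply, Fin.sum_univ_three, RCLike.inner_apply, mul_comm]

lemma cross0 (a b : EuclideanSpace ℝ (Fin 3)) : cross a b 0 = a 1 * b 2 - a 2 * b 1 := rfl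
lemma cross1 (a b : EuclideanSpace ℝ (Fin 3)) : cross a b 1 = a 2 * b 0 - a 0 * b 2 := rfl
lemma cross2 (a b : EuclideanSpace ℝ (Fin 3)) : cross a b 2 = a 0 * b 1 - a 1 * b 0 := rfl

lemma lagrange (a b : EuclideanSpace ℝ (Fin 3)) :
    ⟪cross a b, cross a b⟫ = ⟪a,a⟫ * ⟪b,b⟫ - ⟪a,b⟫ ^ 2 := by
  simp only [inner3, cross0, cross1, cross2]; ring

lemma contDiff_cross {N : WithTop ℕ∞} {f g : ℝ → EuclideanSpace ℝ (Fin 3)}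
    (hf : ContDiff ℝ N f) (hg : ContDiff ℝ N g) :
    ContDiff ℝ N (fun s => cross (f s) (g s)) := by
  rw [contDiff_euclidean] at hf hg ⊢
  intro i
  fin_cases i <;>
    simp only [cross0, cross1, cross2] <;>
    exact ((hf _).mul (hg _)).sub ((hf _).mul (hg _))

theorem stmt10 (γ v η σ : ℝ → EuclideanSpace ℝ (Fin 3)) (m n : ℝ → ℝ)
    (hγ : ContDiff ℝ (⊤ : ℕ∞) γ) (hv : ContDiff ℝ (⊤ : ℕ∞) v)
    (hγ1 : ∀ s, ‖γ s‖ = 1) (hv1 : ∀ s, ‖v s‖ = 1)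
    (hortho : ∀ s, ⟪γ s, v s⟫ = 0) (hleg : ∀ s, ⟪deriv γ s, v s⟫ = 0)
    (hη : ∀ s, η s = cross (γ s) (v s))
    (hm : ∀ s, deriv γ s = m s • η s) (hn : ∀ s, deriv v s = n s • η s)
    (hm0 : ∀ s, m s ≠ 0) (hn0 : ∀ s, n s ≠ 0)
    (hσ : ∀ s, σ s = γ s - (m s / n s) • v s) :
    (∀ s, deriv σ s = -(deriv (fun t => m t / n t) s) • v s) ∧
    ((∀ s t, m s / n s = m t / n t) → ∀ s t, σ s = σ t) := by
  -- η is unit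
  have hηη : ∀ s, ⟪η s, η s⟫ = 1 := by
    intro s
    have h1 : ⟪γ s, γ s⟫ = 1 := by
      rw [real_inner_self_eq_norm_sq, hγ1]; norm_num
    have h2 : ⟪v s, v s⟫ = 1 := by
      rw [real_inner_self_eq_norm_sq, hv1]; norm_num
    rw [hη, lagrange, h1, h2, hortho]; ring
  -- smoothness of η, m, n
  have hgi : ContDiff ℝ (↑(⊤ : ℕ∞)) γ := hγ.of_le (by simp)
  have hvi : ContDiff ℝ (↑(⊤ : ℕ∞)) v := hv.of_le (by simp)
  have hγ' : ContDiff ℝ (↑(⊤ : ℕ∞)) (deriv γ) := (contDiff_infty_iff_deriv.mp hgi).2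
  have hv' : ContDiff ℝ (↑(⊤ : ℕ∞)) (deriv v) := (contDiff_infty_iff_deriv.mp hvi).2
  have hηc : ContDiff ℝ (↑(⊤ : ℕ∞)) η := by
    have := contDiff_cross hgi hvi
    convert this using 1
    exact funext hη
  have hmeq : m = fun s => ⟪deriv γ s, η s⟫ := by
    funext s
    rw [hm s, real_inner_smul_left, hηη s, mul_one]
  have hneq : n = fun s => ⟪deriv v s, η s⟫ := by
    funext s
    rw [hn s, real_inner_smul_left, hηη s, mul_one]
  have hmc : ContDiff ℝ (↑(⊤ : ℕ∞)) m := by rw [hmeq]; exact hγ'.inner ℝ hηc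
  have hnc : ContDiff ℝ (↑(⊤ : ℕ∞)) n := by rw [hneq]; exact hv'.inner ℝ hηc
  have hfd : ∀ s, DifferentiableAt ℝ (fun t => m t / n t) s := fun s =>
    ((hmc.differentiable (by simp) s).div (hnc.differentiable (by simp) s) (hn0 s))
  have hσeq : σ = fun s => γ s - (m s / n s) • v s := funext hσ
  have key : ∀ s, deriv σ s = -(deriv (fun t => m t / n t) s) • v s := by
    intro s
    rw [hσeq]
    rw [deriv_fun_sub (g := fun y => (m y / n y) • v y) (hγ.differentiable (by simp) s)
      ((hfd s).smul (hv.differentiable (by simp) s))]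
    rw [deriv_fun_smul (hfd s) (hv.differentiable (by simp) s)]
    rw [hm s, hn s, smul_smul, div_mul_cancel₀ _ (hn0 s)]
    rw [neg_smul]
    abel
  refine ⟨key, fun hconst s t => ?_⟩
  have hder0 : ∀ s, deriv σ s = 0 := by
    intro s
    rw [key s]
    have : (fun t => m t / n t) = fun _ => m 0 / n 0 := funext fun t => hconst t 0
    rw [this, deriv_const]
    simp
  have hσd : Differentiable ℝ σ := by
    rw [hσeq]
    exact fun s => (hγ.differentiable (by simp) s).sub
      ((hfd s).smul (hv.differentiable (by simp) s))
  exact is_const_of_deriv_eq_zero hσd hder0 s t
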